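/- Along any solution of the system v' = v - w + I, w' = -ε w with ε > 0, starting at a point with v(0) ≥ 0 and w(0) > (1+ε)(v(0) + I), the quantity w(t) - (1+ε)(v(t) + I) remains positive for as long as v(t) ≥ 0; consequently v'(t) < -ε(v(t)+I) there whenever v(t) + I > 0. -/

import Mathlib

/-!
The gap `u = w - (1 + ε)(v + I)` between the solution and the slow manifold solves `u' = u`,
so `u t = exp t * u 0` keeps the sign of `u 0 > 0` for all times. The inequality for `v'`
is a rearrangement of `u > 0`.
-/

open Real

theorem eq_exp_smul_of_hasDerivAt_smul_self {E : Type*} [NormedAddCommGroup E] [NormedSpace ℝ E]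
    {u : ℝ → E} {c : ℝ} (hu : ∀ t, HasDerivAt u (c • u t) t) (t : ℝ) :
    u t = exp (c * t) • u 0 := by
  have hconst : ∀ s, HasDerivAt (fun s => exp (-(c * s)) • u s) 0 s := by
    intro s
    have hexp : HasDerivAt (fun s => exp (-(c * s))) (exp (-(c * s)) * -c) s := by
      simpa using ((hasDerivAt_id s).const_mul c).neg.exp
    refine (hexp.fun_smul (hu s)).congr_deriv ?_
    rw [smul_smul, mul_neg, neg_smul, add_neg_cancel]
  have h := is_const_of_deriv_eq_zero (fun s => (hconst s).differentiableAt)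
    (fun s => (hconst s).deriv) t 0
  simp only [mul_zero, neg_zero, exp_zero, one_smul] at h
  rw [← h, smul_smul, ← exp_add, add_neg_cancel, exp_zero, one_smul]

theorem hasDerivAt_slow_manifold_gap {ε I : ℝ} {v w : ℝ → ℝ}
    (hv : ∀ t, HasDerivAt v (v t - w t + I) t) (hw : ∀ t, HasDerivAt w (-ε * w t) t) (t : ℝ) :
    HasDerivAt (fun t => w t - (1 + ε) * (v t + I)) (w t - (1 + ε) * (v t + I)) t :=
  ((hw t).sub (((hv t).add_const I).const_mul (1 + ε))).congr_deriv (by ring)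

theorem stay_above_slow_manifold_general (ε I : ℝ)
    (v w : ℝ → ℝ)
    (hv : ∀ t, HasDerivAt v (v t - w t + I) t)
    (hw : ∀ t, HasDerivAt w (-ε * w t) t)
    (hw0 : (1 + ε) * (v 0 + I) < w 0) :
    ∀ T : ℝ, 0 ≤ T → (∀ t, t ∈ Set.Icc (0 : ℝ) T → 0 ≤ v t) →
      0 < w T - (1 + ε) * (v T + I) ∧
      (0 < v T + I → v T - w T + I < -ε * (v T + I)) := by
  intro T _ _
  have hgap : 0 < w T - (1 + ε) * (v T + I) := by
    rw [eq_exp_smul_of_hasDerivAt_smul_self (c := 1)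
      (fun t => (hasDerivAt_slow_manifold_gap hv hw t).congr_deriv (one_smul ℝ _).symm) T]
    exact mul_pos (exp_pos _) (sub_pos.mpr hw0)
  exact ⟨hgap, fun _ => by linarith⟩

/-- Solutions of v' = v - w + I, w' = -ε w starting above the slow manifold
S_ε^+ = {w = (1+ε)(v+I)} stay above it while v ≥ 0, and there
v' < -ε(v + I) whenever v + I > 0. -/
theorem stay_above_slow_manifold (ε I : ℝ) (hε : 0 < ε)
    (v w : ℝ → ℝ)
    (hv : ∀ t, HasDerivAt v (v t - w t + I) t)
    (hw : ∀ t, HasDerivAt w (-ε * w t) t)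
    (hv0 : 0 ≤ v 0) (hw0 : (1 + ε) * (v 0 + I) < w 0) :
    ∀ T : ℝ, 0 ≤ T → (∀ t, t ∈ Set.Icc (0 : ℝ) T → 0 ≤ v t) →
      0 < w T - (1 + ε) * (v T + I) ∧
      (0 < v T + I → v T - w T + I < -ε * (v T + I)) :=
  stay_above_slow_manifold_general ε I v w hv hw hw0
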